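/- For every real number x > 0 and every y ∈ (0, 2·arsinh(1)) satisfying F(y) = x, one has 2π·⌈1/y⌉ ≤ 4π/x + 2π, where ⌈·⌉ denotes the ceiling function and F(y) = y/2 + arsinh( sinh(y/2) / √(1 − sinh²(y/2)) ). -/

import Mathlib

/-!
For `y ≤ 1` one has `F y ≤ 2 y`: with `s = sinh (y/2)` the bound `cosh u ≤ exp (u²/2)` gives
`s² ≤ 1/3`, so `√(1 - s²) ≥ 1/3` and the `arsinh` term is at most `arsinh (3 s) ≤ 3 y/2`, because
`3 sinh u ≤ sinh (3u)`. Hence `⌈1/y⌉ < 1/y + 1 ≤ 2/x + 1`; for `y ≥ 1` simply `⌈1/y⌉ ≤ 1`.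
-/

open Real

lemma sinh_sq_le_div_one_sub_sq {u : ℝ} (hu : u ^ 2 < 1) : sinh u ^ 2 ≤ u ^ 2 / (1 - u ^ 2) := by
  have hcosh : cosh u ^ 2 ≤ exp (u ^ 2) := by
    calc cosh u ^ 2 ≤ exp (u ^ 2 / 2) ^ 2 := by
          gcongr
          exact cosh_le_exp_half_sq u
      _ = exp (u ^ 2) := by rw [← exp_nat_mul]; ring_nf
  have hexp := exp_bound_div_one_sub_of_interval (sq_nonneg u) hu
  have hsub : 1 / (1 - u ^ 2) - 1 = u ^ 2 / (1 - u ^ 2) := by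
    field_simp [(sub_pos.mpr hu).ne']
    ring
  rw [sinh_sq, ← hsub]
  linarith

lemma div_sqrt_one_sub_sq_le_three_mul {s : ℝ} (hs : 0 ≤ s) (hs2 : s ^ 2 ≤ 8 / 9) :
    s / √(1 - s ^ 2) ≤ 3 * s := by
  have hsqrt : 1 / 3 ≤ √(1 - s ^ 2) := Real.le_sqrt_of_sq_le (by linarith)
  rw [div_le_iff₀ (by linarith)]
  nlinarith

lemma three_mul_sinh_le_sinh_three_mul {u : ℝ} (hu : 0 ≤ u) : 3 * sinh u ≤ sinh (3 * u) := by
  have := sinh_nonneg_iff.mpr hu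
  rw [sinh_three_mul]
  nlinarith [pow_nonneg this 3]

lemma arsinh_sinh_div_sqrt_le {u : ℝ} (hu0 : 0 ≤ u) (hu1 : u ≤ 1 / 2) :
    arsinh (sinh u / √(1 - sinh u ^ 2)) ≤ 3 * u := by
  have hsinh2 : sinh u ^ 2 ≤ 8 / 9 := by
    have hu2 : u ^ 2 ≤ 1 / 4 := by nlinarith
    calc sinh u ^ 2 ≤ u ^ 2 / (1 - u ^ 2) := sinh_sq_le_div_one_sub_sq (by linarith)
      _ ≤ 8 / 9 := by rw [div_le_iff₀ (by linarith)]; linarith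
  rw [← arsinh_sinh (3 * u), arsinh_le_arsinh]
  calc sinh u / √(1 - sinh u ^ 2) ≤ 3 * sinh u :=
        div_sqrt_one_sub_sq_le_three_mul (sinh_nonneg_iff.mpr hu0) hsinh2
    _ ≤ sinh (3 * u) := three_mul_sinh_le_sinh_three_mul hu0

lemma add_arsinh_le_two_mul {y : ℝ} (hy0 : 0 ≤ y) (hy1 : y ≤ 1) :
    y / 2 + arsinh (sinh (y / 2) / √(1 - sinh (y / 2) ^ 2)) ≤ 2 * y := by
  have := arsinh_sinh_div_sqrt_le (u := y / 2) (by linarith) (by linarith)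
  linarith

lemma ceil_one_div_le {x y : ℝ} (hx : 0 < x) (hy : 0 < y) (hxy : y < 1 → x ≤ 2 * y) :
    (⌈1 / y⌉ : ℝ) ≤ 2 / x + 1 := by
  have h2x : 0 < 2 / x := by positivity
  rcases le_or_gt 1 y with hy1 | hy1
  · have : ⌈1 / y⌉ ≤ 1 := Int.ceil_le.mpr (by push_cast; rwa [div_le_one hy])
    have : (⌈1 / y⌉ : ℝ) ≤ 1 := by exact_mod_cast this
    linarith
  · have h1y : 1 / y ≤ 2 / x := by
      rw [div_le_div_iff₀ hy hx]
      linarith [hxy hy1]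
    linarith [Int.ceil_lt_add_one (1 / y)]

/-- for every `x > 0` and every `y ∈ (0, 2·arsinh 1)` with `F y = x`,
`2π·⌈1/y⌉ ≤ 4π/x + 2π`, where
`F(y) = y/2 + arsinh(sinh(y/2)/√(1 − sinh²(y/2)))`. -/
theorem stmt_5 (x : ℝ) (hx : 0 < x) (y : ℝ) (hy : y ∈ Set.Ioo 0 (2 * Real.arsinh 1))
    (hF : y / 2 + Real.arsinh (Real.sinh (y / 2) / Real.sqrt (1 - Real.sinh (y / 2) ^ 2)) = x) :
    2 * π * (⌈1 / y⌉ : ℝ) ≤ 4 * π / x + 2 * π := by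
  have hy0 : 0 < y := hy.1
  have hceil : (⌈1 / y⌉ : ℝ) ≤ 2 / x + 1 :=
    ceil_one_div_le hx hy0 fun hy1 => hF ▸ add_arsinh_le_two_mul hy0.le hy1.le
  calc 2 * π * (⌈1 / y⌉ : ℝ) ≤ 2 * π * (2 / x + 1) := by gcongr
    _ = 4 * π / x + 2 * π := by ring
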